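/- (Jacobi triple product) For complex p, z with |p| < 1 and z ≠ 0, one has (p;p)_∞ (z;p)_∞ (p z^{-1};p)_∞ = ∑_{n∈ℤ} (-1)^n p^{n(n-1)/2} z^n, where the series converges absolutely. -/

import Mathlib

/-- The infinite q-Pochhammer symbol `(x;p)_∞ = ∏_{n≥0} (1 - x pⁿ)`. -/
noncomputable def qPoch (x p : ℂ) : ℂ := ∏' n : ℕ, (1 - x * p ^ n)

/-!
Cauchy's `q`-binomial theorem `(x;q)_m = ∑_{i+j=m} (-1)^i q^(i(i-1)/2) [i+j, i]_q x^i`, taken at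
`x = z q^(-N)` and `m = 2N`, gives the finite triple product
`(z;q)_N (q/z;q)_N = ∑_{|n| ≤ N} (-1)^n q^(n(n-1)/2) z^n [2N, N+n]_q`.
After multiplying by `(q;q)_N`, the coefficient
`(q;q)_N [2N, N+n]_q = (q;q)_N (q;q)_(2N) / ((q;q)_(N+n) (q;q)_(N-n))` tends to `1` and is
uniformly bounded when `|q| < 1`, so Tannery's theorem lets `N → ∞`. The substitution needs
`q ≠ 0`; at `q = 0` both sides equal `1 - z`.
-/

open Filter Finset Topology

def choose₂ (n : ℤ) : ℤ := n * (n - 1) / 2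

lemma two_mul_choose₂ (n : ℤ) : 2 * choose₂ n = n * (n - 1) :=
  Int.mul_ediv_cancel' (Int.even_mul_pred_self n).two_dvd

lemma choose₂_add (a b : ℤ) : choose₂ (a + b) = choose₂ a + choose₂ b + a * b :=
  mul_left_cancel₀ two_ne_zero <| by
    linear_combination two_mul_choose₂ (a + b) - two_mul_choose₂ a - two_mul_choose₂ b

lemma choose₂_natCast (n : ℕ) : choose₂ n = n.choose 2 := by
  induction n with
  | zero => rfl
  | succ n ih =>
    rw [Nat.cast_add, choose₂_add, ih, Nat.choose_succ_succ', Nat.choose_one_right]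
    push_cast
    rw [show choose₂ 1 = 0 from rfl]
    ring

lemma choose₂_neg (n : ℤ) : choose₂ (-n) = choose₂ (n + 1) :=
  mul_left_cancel₀ two_ne_zero <| by
    linear_combination two_mul_choose₂ (-n) - two_mul_choose₂ (n + 1)

lemma choose₂_ne_zero {n : ℤ} (h0 : n ≠ 0) (h1 : n ≠ 1) : choose₂ n ≠ 0 := by
  intro h
  have := two_mul_choose₂ n
  rw [h, mul_zero, eq_comm, mul_eq_zero, sub_eq_zero] at this
  tauto

section Gaussian

variable {R : Type*} [CommRing R]

def qPochFin (x q : R) (n : ℕ) : R := ∏ k ∈ range n, (1 - x * q ^ k)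

lemma qPochFin_zero (x q : R) : qPochFin x q 0 = 1 := prod_range_zero _

lemma qPochFin_succ (x q : R) (n : ℕ) :
    qPochFin x q (n + 1) = qPochFin x q n * (1 - x * q ^ n) :=
  prod_range_succ _ n

lemma qPochFin_succ' (x q : R) (n : ℕ) :
    qPochFin x q (n + 1) = (1 - x) * qPochFin (x * q) q n := by
  simp only [qPochFin, prod_range_succ', pow_zero, mul_one, pow_succ, mul_assoc, mul_comm q]
  ring

/-- `gaussBinom q i j` is the Gaussian binomial coefficient `[i+j, i]_q`. -/
def gaussBinom (q : R) : ℕ → ℕ → R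
  | 0, _ => 1
  | _ + 1, 0 => 1
  | i + 1, j + 1 => q ^ (i + 1) * gaussBinom q (i + 1) j + gaussBinom q i (j + 1)

lemma gaussBinom_mul_qPochFin (q : R) (i j : ℕ) :
    gaussBinom q i j * (qPochFin q q i * qPochFin q q j) = qPochFin q q (i + j) := by
  induction i, j using gaussBinom.induct with
  | case1 j => simp [gaussBinom, qPochFin_zero]
  | case2 i => simp [gaussBinom, qPochFin_zero]
  | case3 i j ih₁ ih₂ =>
    rw [Nat.add_right_comm] at ih₁
    rw [← add_assoc] at ih₂
    rw [qPochFin_succ q q i] at ih₁ ⊢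
    rw [qPochFin_succ q q j] at ih₂ ⊢
    rw [gaussBinom, show i + 1 + (j + 1) = i + j + 1 + 1 by ring, qPochFin_succ q q (i + j + 1)]
    linear_combination (q ^ (i + 1) * (1 - q * q ^ j)) * ih₁ + (1 - q * q ^ i) * ih₂

lemma qPochFin_eq_sum_gaussBinom (x q : R) (m : ℕ) :
    qPochFin x q m = ∑ ij ∈ antidiagonal m,
      (-1) ^ ij.1 * q ^ ij.1.choose 2 * gaussBinom q ij.1 ij.2 * x ^ ij.1 := by
  -- `(x;q)_(m+1) = (1 - x) (xq;q)_m`, and the recursion of `gaussBinom` is what matches coefficients.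
  induction m generalizing x with
  | zero => simp [qPochFin_zero, gaussBinom]
  | succ m ih =>
    rw [qPochFin_succ', ih]
    rcases m with _ | m
    · simp [gaussBinom, Nat.sum_antidiagonal_succ, sub_eq_add_neg, add_comm]
    set a : ℕ × ℕ → R := fun ij =>
      (-1) ^ ij.1 * q ^ ij.1.choose 2 * gaussBinom q ij.1 ij.2 * (x * q) ^ ij.1
    have hsucc := Nat.sum_antidiagonal_succ (n := m) (f := a)
    have hsucc' := Nat.sum_antidiagonal_succ' (n := m) (f := a)
    have hstep (ij : ℕ × ℕ) : (-1) ^ (ij.1 + 1) * q ^ (ij.1 + 1).choose 2 *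
        gaussBinom q (ij.1 + 1) (ij.2 + 1) * x ^ (ij.1 + 1) =
          a (ij.1 + 1, ij.2) - x * a (ij.1, ij.2 + 1) := by
      simp only [a, gaussBinom, Nat.choose_succ_succ', Nat.choose_one_right]
      ring
    change (1 - x) * ∑ p ∈ antidiagonal (m + 1), a p = _
    conv_rhs => rw [Nat.sum_antidiagonal_succ, Nat.sum_antidiagonal_succ']
    simp only [hstep, sum_sub_distrib, ← mul_sum]
    have hfirst : a (0, m + 1) = 1 := by simp [a, gaussBinom]
    have hlast : (-1) ^ (m + 1 + 1) * q ^ (m + 1 + 1).choose 2 * gaussBinom q (m + 1 + 1) 0 *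
        x ^ (m + 1 + 1) = -x * a (m + 1, 0) := by
      simp only [a, gaussBinom, Nat.choose_succ_succ' (m + 1), Nat.choose_one_right]
      ring
    have hzero : (-1) ^ 0 * q ^ Nat.choose 0 2 * gaussBinom q 0 (m + 1 + 1) * x ^ 0 = 1 := by
      simp [gaussBinom]
    rw [hlast, hzero]
    linear_combination hsucc - x * hsucc' + hfirst

end Gaussian

section Field

variable {K : Type*} [Field K]

def jacobiTerm (q z : K) (n : ℤ) : K := (-1) ^ n * q ^ choose₂ n * z ^ n

lemma jacobiTerm_natCast (q z : K) (n : ℕ) :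
    jacobiTerm q z n = (-1) ^ n * q ^ n.choose 2 * z ^ n := by
  simp [jacobiTerm, choose₂_natCast]

lemma jacobiTerm_ne_zero {q z : K} (hq : q ≠ 0) (hz : z ≠ 0) (n : ℤ) : jacobiTerm q z n ≠ 0 :=
  mul_ne_zero (mul_ne_zero (zpow_ne_zero _ (by norm_num)) (zpow_ne_zero _ hq)) (zpow_ne_zero _ hz)

lemma jacobiTerm_add {q z : K} (hq : q ≠ 0) (hz : z ≠ 0) (a b : ℤ) :
    jacobiTerm q z (a + b) = jacobiTerm q z a * jacobiTerm q z b * q ^ (a * b) := by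
  simp only [jacobiTerm, choose₂_add, zpow_add₀ hq, zpow_add₀ hz,
    zpow_add₀ (by norm_num : (-1 : K) ≠ 0)]
  ring

lemma jacobiTerm_mul_right (q z w : K) (n : ℤ) :
    jacobiTerm q (z * w) n = jacobiTerm q z n * w ^ n := by
  simp only [jacobiTerm, mul_zpow]
  ring

lemma qPochFin_eq_sum_jacobiTerm (x q : K) (m : ℕ) :
    qPochFin x q m = ∑ ij ∈ antidiagonal m, jacobiTerm q x ij.1 * gaussBinom q ij.1 ij.2 := by
  simp only [qPochFin_eq_sum_gaussBinom, jacobiTerm_natCast]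
  exact sum_congr rfl fun _ _ => by ring

lemma qPochFin_two_mul_zpow {q z : K} (hq : q ≠ 0) (hz : z ≠ 0) (N : ℕ) :
    qPochFin (z * q ^ (-N : ℤ)) q (2 * N) =
      jacobiTerm q z N * q ^ (-(N * N) : ℤ) * (qPochFin z q N * qPochFin (q * z⁻¹) q N) := by
  induction N with
  | zero => simp [qPochFin_zero, jacobiTerm, choose₂]
  | succ N ih =>
    have hshift : z * q ^ (-(N + 1 : ℕ) : ℤ) * q = z * q ^ (-N : ℤ) := by
      rw [mul_assoc, ← zpow_add_one₀ hq]
      push_cast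
      ring_nf
    rw [show 2 * (N + 1) = 2 * N + 1 + 1 by ring, qPochFin_succ', qPochFin_succ, hshift, ih,
      Nat.cast_succ, jacobiTerm_add hq hz, qPochFin_succ, qPochFin_succ]
    have h1 : jacobiTerm q z 1 = -z := by simp [jacobiTerm, choose₂]
    rw [h1, show -((N : ℤ) + 1) = -N + -1 by ring,
      show -(((N : ℤ) + 1) * (N + 1)) = -(N * N) + -N + -N + -1 by ring,
      mul_one, two_mul, pow_add, ← zpow_natCast]
    simp only [zpow_add₀ hq, zpow_neg]
    field_simp
    ring

theorem qPochFin_mul_qPochFin_eq_sum {q z : K} (hq : q ≠ 0) (hz : z ≠ 0) (N : ℕ) :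
    qPochFin z q N * qPochFin (q * z⁻¹) q N =
      ∑ n ∈ Icc (-N : ℤ) N, jacobiTerm q z n * gaussBinom q (N + n).toNat (N - n).toNat := by
  have hc : jacobiTerm q z N * q ^ (-(N * N) : ℤ) ≠ 0 :=
    mul_ne_zero (jacobiTerm_ne_zero hq hz N) (zpow_ne_zero _ hq)
  apply mul_left_cancel₀ hc
  rw [← qPochFin_two_mul_zpow hq hz, qPochFin_eq_sum_jacobiTerm, mul_sum]
  refine sum_nbij' (fun ij => (ij.1 : ℤ) - N) (fun n => ((N + n).toNat, (N - n).toNat))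
    ?_ ?_ ?_ ?_ ?_
  iterate 4
    intro _ h
    simp only [HasAntidiagonal.mem_antidiagonal, mem_Icc, Prod.ext_iff] at h ⊢
    omega
  · intro ij hij
    simp only [HasAntidiagonal.mem_antidiagonal] at hij
    have hi : ij.1 = ((N : ℤ) + (ij.1 - N)).toNat := by omega
    have hj : ij.2 = ((N : ℤ) - (ij.1 - N)).toNat := by omega
    rw [← hi, ← hj, jacobiTerm_mul_right, show (ij.1 : ℤ) = N + (ij.1 - N) by ring,
      add_sub_cancel_left, jacobiTerm_add hq hz, ← zpow_mul]
    generalize (ij.1 : ℤ) - N = n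
    have hexp : q ^ ((N : ℤ) * n) * q ^ (-N * (N + n)) = q ^ (-(N * N) : ℤ) := by
      rw [← zpow_add₀ hq]
      ring_nf
    linear_combination (jacobiTerm q z N * jacobiTerm q z n * gaussBinom q ij.1 ij.2) * hexp

end Field

lemma summable_pow_mul_pow_of_superlinear {r : ℝ} (hr0 : 0 ≤ r) (hr : r < 1) (c : ℝ) {e : ℕ → ℕ}
    (he : ∀ K, ∀ᶠ n in atTop, K * n ≤ e n) : Summable fun n => r ^ e n * c ^ n := by
  obtain ⟨K, hK⟩ := exists_pow_lt_of_lt_one (show 0 < 1 / (2 * (|c| + 1)) by positivity) hr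
  have hK' : r ^ K * |c| ≤ 1 / 2 :=
    calc r ^ K * |c| ≤ 1 / (2 * (|c| + 1)) * (|c| + 1) := by gcongr; linarith
      _ = 1 / 2 := by field_simp
  refine Summable.of_norm_bounded_eventually_nat summable_geometric_two ?_
  filter_upwards [he K] with n hn
  calc ‖r ^ e n * c ^ n‖ = r ^ e n * |c| ^ n := by
        rw [norm_mul, norm_pow, norm_pow, Real.norm_of_nonneg hr0, Real.norm_eq_abs]
    _ ≤ r ^ (K * n) * |c| ^ n := by gcongr ?_ * _; exact pow_le_pow_of_le_one hr0 hr.le hn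
    _ = (r ^ K * |c|) ^ n := by rw [pow_mul, mul_pow]
    _ ≤ (1 / 2) ^ n := by gcongr

lemma eventually_mul_le_choose_two (K : ℕ) : ∀ᶠ n in atTop, K * n ≤ n.choose 2 := by
  filter_upwards [eventually_ge_atTop (2 * K + 1)] with n hn
  rw [Nat.choose_two_right, Nat.le_div_iff_mul_le two_pos]
  calc K * n * 2 = n * (2 * K) := by ring
    _ ≤ n * (n - 1) := Nat.mul_le_mul_left _ (by omega)

lemma summable_norm_jacobiTerm {𝕜 : Type*} [NormedField 𝕜] {p : 𝕜} (hp : ‖p‖ < 1) (z : 𝕜) :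
    Summable fun n : ℤ => ‖jacobiTerm p z n‖ := by
  refine Summable.of_nat_of_neg ?_ ?_
  · simpa [jacobiTerm_natCast] using
      summable_pow_mul_pow_of_superlinear (norm_nonneg p) hp ‖z‖ eventually_mul_le_choose_two
  · have hneg (n : ℕ) : ‖jacobiTerm p z (-n)‖ = ‖p‖ ^ (n + 1).choose 2 * ‖z⁻¹‖ ^ n := by
      rw [jacobiTerm, choose₂_neg, ← Nat.cast_succ, choose₂_natCast]
      simp
    simpa [hneg] using summable_pow_mul_pow_of_superlinear (norm_nonneg p) hp ‖z⁻¹‖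
      fun K => (eventually_mul_le_choose_two K).mono fun n hn =>
        hn.trans (Nat.choose_le_choose 2 n.le_succ)

lemma exists_norm_le_of_tendsto {E : Type*} [SeminormedAddCommGroup E] {u : ℕ → E} {a : E}
    (hu : Tendsto u atTop (𝓝 a)) :
    ∃ C, ∀ n, ‖u n‖ ≤ C := by
  obtain ⟨C, hC⟩ := hu.norm.bddAbove_range
  exact ⟨C, fun n => hC ⟨n, rfl⟩⟩

section Complex

variable {q : ℂ}

lemma summable_neg_mul_pow (x : ℂ) (hq : ‖q‖ < 1) : Summable fun n : ℕ => -(x * q ^ n) :=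
  ((summable_geometric_of_norm_lt_one hq).mul_left x).neg

lemma hasProd_qPoch (x : ℂ) (hq : ‖q‖ < 1) : HasProd (fun n => 1 - x * q ^ n) (qPoch x q) := by
  have h := (Complex.multipliable_one_add_of_summable (summable_neg_mul_pow x hq)).hasProd
  simp only [← sub_eq_add_neg] at h
  exact h

lemma qPoch_ne_zero {x : ℂ} (hq : ‖q‖ < 1) (hx : ∀ n, 1 - x * q ^ n ≠ 0) : qPoch x q ≠ 0 := by
  have hlog := Complex.summable_log_one_add_of_summable (summable_neg_mul_pow x hq)
  simp only [← sub_eq_add_neg] at hlog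
  rw [qPoch, ← Complex.cexp_tsum_eq_tprod hx hlog]
  exact Complex.exp_ne_zero _

lemma tendsto_qPochFin (x : ℂ) (hq : ‖q‖ < 1) :
    Tendsto (qPochFin x q) atTop (𝓝 (qPoch x q)) :=
  (hasProd_qPoch x hq).tendsto_prod_nat

lemma one_sub_mul_pow_ne_zero (hq : ‖q‖ < 1) (n : ℕ) : 1 - q * q ^ n ≠ 0 := by
  rw [sub_ne_zero, ne_comm, ← pow_succ']
  intro h
  have := congrArg norm h
  rw [norm_pow, norm_one] at this
  exact (pow_lt_one₀ (norm_nonneg q) hq n.succ_ne_zero).ne this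

lemma qPochFin_self_ne_zero (hq : ‖q‖ < 1) (n : ℕ) : qPochFin q q n ≠ 0 :=
  prod_ne_zero_iff.2 fun k _ => one_sub_mul_pow_ne_zero hq k

lemma gaussBinom_eq_div (hq : ‖q‖ < 1) (i j : ℕ) :
    gaussBinom q i j = qPochFin q q (i + j) / (qPochFin q q i * qPochFin q q j) :=
  eq_div_of_mul_eq (mul_ne_zero (qPochFin_self_ne_zero hq i) (qPochFin_self_ne_zero hq j))
    (gaussBinom_mul_qPochFin q i j)

lemma exists_norm_gaussBinom_le (hq : ‖q‖ < 1) : ∃ C, ∀ i j, ‖gaussBinom q i j‖ ≤ C := by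
  have hlim := tendsto_qPochFin q hq
  obtain ⟨C₁, hC₁⟩ := exists_norm_le_of_tendsto hlim
  obtain ⟨C₂, hC₂⟩ := exists_norm_le_of_tendsto
    (hlim.inv₀ (qPoch_ne_zero hq (one_sub_mul_pow_ne_zero hq)))
  refine ⟨C₁ * (C₂ * C₂), fun i j => ?_⟩
  rw [gaussBinom_eq_div hq, div_eq_mul_inv, mul_inv, norm_mul, norm_mul]
  have hC₂0 : 0 ≤ C₂ := (norm_nonneg _).trans (hC₂ 0)
  exact mul_le_mul (hC₁ _) (mul_le_mul (hC₂ _) (hC₂ _) (norm_nonneg _) hC₂0) (by positivity)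
    ((norm_nonneg _).trans (hC₁ 0))

lemma tendsto_qPochFin_mul_gaussBinom (hq : ‖q‖ < 1) (n : ℤ) :
    Tendsto (fun N : ℕ => qPochFin q q N * gaussBinom q (N + n).toNat (N - n).toNat)
      atTop (𝓝 1) := by
  have hlim := tendsto_qPochFin q hq
  have hL := qPoch_ne_zero hq (one_sub_mul_pow_ne_zero hq)
  have hplus : Tendsto (fun N : ℕ => ((N : ℤ) + n).toNat) atTop atTop :=
    tendsto_atTop_atTop.2 fun b => ⟨b + n.natAbs, fun N hN => by omega⟩
  have hminus : Tendsto (fun N : ℕ => ((N : ℤ) - n).toNat) atTop atTop :=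
    tendsto_atTop_atTop.2 fun b => ⟨b + n.natAbs, fun N hN => by omega⟩
  have htwo : Tendsto (fun N : ℕ => 2 * N) atTop atTop :=
    tendsto_id.const_mul_atTop' two_pos
  have h := (hlim.mul (hlim.comp htwo)).div ((hlim.comp hplus).mul (hlim.comp hminus))
    (mul_ne_zero hL hL)
  rw [div_self (mul_ne_zero hL hL)] at h
  refine h.congr' ?_
  filter_upwards [eventually_ge_atTop n.natAbs] with N hN
  rw [gaussBinom_eq_div hq, show ((N : ℤ) + n).toNat + ((N : ℤ) - n).toNat = 2 * N by omega]
  simp only [Pi.div_apply, Function.comp_apply, mul_div_assoc]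

theorem qPoch_mul_qPoch_mul_qPoch_eq_tsum (hq : ‖q‖ < 1) (hq0 : q ≠ 0) {z : ℂ} (hz : z ≠ 0) :
    qPoch q q * (qPoch z q * qPoch (q * z⁻¹) q) = ∑' n, jacobiTerm q z n := by
  obtain ⟨C₁, hC₁⟩ := exists_norm_le_of_tendsto (tendsto_qPochFin q hq)
  obtain ⟨C₂, hC₂⟩ := exists_norm_gaussBinom_le hq
  set F : ℕ → ℤ → ℂ := fun N n => if n ∈ Icc (-N : ℤ) N then
    jacobiTerm q z n * (qPochFin q q N * gaussBinom q (N + n).toNat (N - n).toNat) else 0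
  have hF (N : ℕ) : ∑' n, F N n = qPochFin q q N * (qPochFin z q N * qPochFin (q * z⁻¹) q N) := by
    rw [tsum_eq_sum (s := Icc (-N : ℤ) N) fun n hn => if_neg hn, sum_ite_of_true fun _ h => h,
      qPochFin_mul_qPochFin_eq_sum hq0 hz, mul_sum]
    exact sum_congr rfl fun _ _ => by ring
  have hlim : Tendsto (fun N => ∑' n, F N n) atTop (𝓝 (∑' n, jacobiTerm q z n)) := by
    refine tendsto_tsum_of_dominated_convergence
      ((summable_norm_jacobiTerm hq z).mul_right (C₁ * C₂)) (fun n => ?_)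
      (Eventually.of_forall fun N n => ?_)
    · simpa only [mul_one] using ((tendsto_qPochFin_mul_gaussBinom hq n).const_mul (jacobiTerm q z n)).congr'
        (by
          filter_upwards [eventually_ge_atTop n.natAbs] with N hN
          simp only [F, mem_Icc]
          rw [if_pos (by omega)])
    · have hC₁0 : 0 ≤ C₁ := (norm_nonneg _).trans (hC₁ 0)
      have hC₂0 : 0 ≤ C₂ := (norm_nonneg _).trans (hC₂ 0 0)
      simp only [F]
      split_ifs
      · rw [norm_mul, norm_mul]
        exact mul_le_mul_of_nonneg_left (mul_le_mul (hC₁ N) (hC₂ _ _) (norm_nonneg _) hC₁0)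
          (norm_nonneg _)
      · rw [norm_zero]
        exact mul_nonneg (norm_nonneg _) (mul_nonneg hC₁0 hC₂0)
  simp only [hF] at hlim
  exact tendsto_nhds_unique ((tendsto_qPochFin q hq).mul
    ((tendsto_qPochFin z hq).mul (tendsto_qPochFin _ hq))) hlim

end Complex

lemma qPoch_zero_right (x : ℂ) : qPoch x 0 = 1 - x := by
  rw [qPoch, tprod_eq_mulSingle 0 fun n hn => by simp [hn]]
  simp

lemma tsum_jacobiTerm_zero_left (z : ℂ) : ∑' n, jacobiTerm 0 z n = 1 - z := by
  rw [tsum_eq_sum (s := {0, 1}) fun n hn => ?_]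
  · simp [jacobiTerm, choose₂, sub_eq_add_neg]
  · simp only [mem_insert, mem_singleton, not_or] at hn
    simp [jacobiTerm, zero_zpow _ (choose₂_ne_zero hn.1 hn.2)]

/-- Jacobi triple product identity. -/
theorem jacobi_triple_product (p z : ℂ) (hp : ‖p‖ < 1) (hz : z ≠ 0) :
    Summable (fun n : ℤ => ‖(-1 : ℂ) ^ n * p ^ (n * (n - 1) / 2) * z ^ n‖) ∧
      qPoch p p * qPoch z p * qPoch (p * z⁻¹) p =
        ∑' n : ℤ, (-1 : ℂ) ^ n * p ^ (n * (n - 1) / 2) * z ^ n := by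
  refine ⟨summable_norm_jacobiTerm hp z, ?_⟩
  change _ = ∑' n, jacobiTerm p z n
  rcases eq_or_ne p 0 with rfl | hp0
  · rw [tsum_jacobiTerm_zero_left, qPoch_zero_right, qPoch_zero_right, qPoch_zero_right]
    ring
  · rw [mul_assoc]
    exact qPoch_mul_qPoch_mul_qPoch_eq_tsum hp hp0 hz
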